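/- arXiv:2101.00050 — 2 statements merged into one kernel-verified Lean document; each statement's English description precedes it below -/
import Mathlib

section
/- Let P be a positive opetope and i ∈ ℕ. The map π_i : P*_{i+1} → St(P*_i), given by π_i(p) = { s ∈ P*_i : s <⁺ γ(p) } where P*_j = P_j − γ(P_{j+1}), is a constellation: it is monotone with respect to ≤⁻ on P*_{i+1} and inclusion on convex subtrees, preserves the top element, and if π_i(p) ∩ π_i(p') ≠ ∅ then p ⊥⁻ p'. -/
/-- A positive hypergraph: graded faces with codomain functions `γ` and (total) domain
relations `δ`. -/
structure PreOpetope where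
  P : ℕ → Type
  γ : ∀ k, P (k+1) → P k
  δ : ∀ k, P (k+1) → Set (P k)

namespace PreOpetope

/-- The lower order `<⁻` on `P (k+1)`: transitive closure of `γ a ∈ δ b`. -/
def ltm (O : PreOpetope) (k : ℕ) : O.P (k+1) → O.P (k+1) → Prop :=
  Relation.TransGen (fun a b => O.γ k a ∈ O.δ k b)

/-- The lower order in every dimension (empty in dimension `0`). -/
def ltmAll (O : PreOpetope) : ∀ k, O.P k → O.P k → Prop
  | 0 => fun _ _ => False
  | (k+1) => O.ltm k

/-- The upper order `<⁺` on `P k`: transitive closure of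
`∃ c, a ∈ δ c ∧ γ c = b`. -/
def ltp (O : PreOpetope) (k : ℕ) : O.P k → O.P k → Prop :=
  Relation.TransGen (fun a b => ∃ c : O.P (k+1), a ∈ O.δ k c ∧ O.γ k c = b)

/-- `O` is a positive opetope: a finite positive hypergraph satisfying globularity,
strictness, disjointness and pencil linearity, with at most one maximal face
(`P_l − δ(P_{l+1})`) in every dimension. -/
structure IsOpetope (O : PreOpetope) : Prop where
  fin : ∀ k, Finite (O.P k)
  bounded : ∃ n, ∀ k, n < k → IsEmpty (O.P k)
  ne : Nonempty (O.P 0)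
  pos : ∀ k (a : O.P (k+1)), (O.δ k a).Nonempty
  δzero : ∀ a : O.P 1, ∃! x, x ∈ O.δ 0 a
  glob_γ : ∀ k (a : O.P (k+2)),
    {x : O.P k | x = O.γ k (O.γ (k+1) a)} =
      {x | ∃ b ∈ O.δ (k+1) a, O.γ k b = x} \ {x | ∃ b ∈ O.δ (k+1) a, x ∈ O.δ k b}
  glob_δ : ∀ k (a : O.P (k+2)),
    O.δ k (O.γ (k+1) a) =
      {x | ∃ b ∈ O.δ (k+1) a, x ∈ O.δ k b} \ {x | ∃ b ∈ O.δ (k+1) a, O.γ k b = x}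
  strict : ∀ k (a : O.P k), ¬ O.ltp k a a
  strict0 : ∀ a b : O.P 0, a = b ∨ O.ltp 0 a b ∨ O.ltp 0 b a
  disj : ∀ k (a b : O.P (k+1)),
    ¬ ((O.ltm k a b ∨ O.ltm k b a) ∧ (O.ltp (k+1) a b ∨ O.ltp (k+1) b a))
  pencil_γ : ∀ k (a b : O.P (k+1)), O.γ k a = O.γ k b →
    a = b ∨ O.ltp (k+1) a b ∨ O.ltp (k+1) b a
  pencil_δ : ∀ k (x : O.P k) (a b : O.P (k+1)), x ∈ O.δ k a → x ∈ O.δ k b →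
    a = b ∨ O.ltp (k+1) a b ∨ O.ltp (k+1) b a
  size : ∀ k (a b : O.P k), (¬ ∃ c : O.P (k+1), a ∈ O.δ k c) →
    (¬ ∃ c : O.P (k+1), b ∈ O.δ k c) → a = b

end PreOpetope

/-- `π_i(p) = { s ∈ P_i − γ(P_{i+1}) : s <⁺ γ(p) }`. -/
def PreOpetope.piFace (O : PreOpetope) (i : ℕ) (p : O.P (i+1)) : Set (O.P i) :=
  {s | (¬ ∃ c : O.P (i+1), O.γ i c = s) ∧ O.ltp i s (O.γ i p)}

namespace PreOpetope

variable {O : PreOpetope}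

lemma ltm_gamma (k : ℕ) {a b : O.P (k+1)} (h : O.ltm k a b) :
    O.ltp k (O.γ k a) (O.γ k b) := by
  induction h with
  | single h => exact Relation.TransGen.single ⟨_, h, rfl⟩
  | tail _ h ih => exact ih.tail ⟨_, h, rfl⟩

lemma ltp_wf (hO : O.IsOpetope) (k : ℕ) : WellFounded (O.ltp k) := by
  have := hO.fin k
  have h1 : IsTrans (O.P k) (O.ltp k) := ⟨fun _ _ _ => Relation.TransGen.trans⟩
  have h2 : IsIrrefl (O.P k) (O.ltp k) := ⟨hO.strict k⟩
  exact Finite.wellFounded_of_trans_of_irrefl _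

lemma flip_ltp_wf (hO : O.IsOpetope) (k : ℕ) : WellFounded (flip (O.ltp k)) := by
  have := hO.fin k
  have h1 : IsTrans (O.P k) (flip (O.ltp k)) :=
    ⟨fun _ _ _ h1 h2 => Relation.TransGen.trans h2 h1⟩
  have h2 : IsIrrefl (O.P k) (flip (O.ltp k)) := ⟨hO.strict k⟩
  exact Finite.wellFounded_of_trans_of_irrefl _

lemma ltm_wf_flip (hO : O.IsOpetope) (k : ℕ) : WellFounded (flip (O.ltm k)) := by
  have := hO.fin (k+1)
  have h1 : IsTrans (O.P (k+1)) (flip (O.ltm k)) :=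
    ⟨fun _ _ _ h1 h2 => Relation.TransGen.trans h2 h1⟩
  have h2 : IsIrrefl (O.P (k+1)) (flip (O.ltm k)) :=
    ⟨fun a h => hO.strict k _ (ltm_gamma k h)⟩
  exact Finite.wellFounded_of_trans_of_irrefl _

/-- Non-codomain faces have nothing `<⁺`-below... above them. -/
lemma not_ltp_nongamma {k : ℕ} {p : O.P k} (hp : ¬ ∃ c : O.P (k+1), O.γ k c = p)
    {x : O.P k} (h : O.ltp k x p) : False := by
  obtain ⟨m, -, c, -, hc⟩ := Relation.TransGen.tail'_iff.mp h
  exact hp ⟨c, hc⟩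

lemma rtg_cases {α} {r : α → α → Prop} {a b : α} (h : Relation.ReflTransGen r a b) :
    a = b ∨ Relation.TransGen r a b := by
  induction h with
  | refl => exact Or.inl rfl
  | tail h1 h2 ih =>
    rcases ih with rfl | ih
    · exact Or.inr (Relation.TransGen.single h2)
    · exact Or.inr (ih.tail h2)

/-- From globularity: for `u ∈ δ e`, either `γ u` hits the domain of some `b ∈ δ e`,
or `γ u = γ (γ e)`. -/
lemma gamma_mem_or (hO : O.IsOpetope) (k : ℕ) (e : O.P (k+2)) {u : O.P (k+1)}
    (hu : u ∈ O.δ (k+1) e) :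
    (∃ b ∈ O.δ (k+1) e, O.γ k u ∈ O.δ k b) ∨ O.γ k u = O.γ k (O.γ (k+1) e) := by
  by_cases h : ∃ b ∈ O.δ (k+1) e, O.γ k u ∈ O.δ k b
  · exact Or.inl h
  · right
    have h2 : O.γ k u ∈
        ({x | ∃ b ∈ O.δ (k+1) e, O.γ k b = x} \ {x | ∃ b ∈ O.δ (k+1) e, x ∈ O.δ k b} :
          Set (O.P k)) := ⟨⟨u, hu, rfl⟩, h⟩
    rw [← hO.glob_γ k e] at h2
    exact h2

/-- Every `u ∈ δ e` is `≤⁻`-below some `b ∈ δ e` with `γ b = γ (γ e)`. -/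
lemma le_max_in_delta (hO : O.IsOpetope) (k : ℕ) (e : O.P (k+2)) :
    ∀ u ∈ O.δ (k+1) e, ∃ b ∈ O.δ (k+1) e,
      (u = b ∨ O.ltm k u b) ∧ O.γ k b = O.γ k (O.γ (k+1) e) := by
  intro u
  refine (ltm_wf_flip hO k).induction
    (C := fun u => u ∈ O.δ (k+1) e → ∃ b ∈ O.δ (k+1) e,
      (u = b ∨ O.ltm k u b) ∧ O.γ k b = O.γ k (O.γ (k+1) e)) u ?_
  intro u IH hu
  rcases gamma_mem_or hO k e hu with ⟨b0, hb0, hm⟩ | heq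
  · have hub0 : O.ltm k u b0 := Relation.TransGen.single hm
    obtain ⟨b, hb, hle, hγ⟩ := IH b0 hub0 hb0
    refine ⟨b, hb, Or.inr ?_, hγ⟩
    rcases hle with rfl | hle
    · exact hub0
    · exact hub0.trans hle
  · exact ⟨u, hu, Or.inl rfl, heq⟩

/-- If `a <⁺ b` then `a` is `≤⁻`-below some `u` with `γ u = γ b`. -/
lemma ltp_to_ltm (hO : O.IsOpetope) (k : ℕ) {a b : O.P (k+1)} (h : O.ltp (k+1) a b) :
    ∃ u : O.P (k+1), (a = u ∨ O.ltm k a u) ∧ O.γ k u = O.γ k b := by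
  induction h with
  | single h =>
    obtain ⟨e, hae, hγe⟩ := h
    obtain ⟨v, hv, hav, hγv⟩ := le_max_in_delta hO k e a hae
    exact ⟨v, hav, by rw [hγv, hγe]⟩
  | tail ham h ih =>
    obtain ⟨e, hme, hγe⟩ := h
    obtain ⟨u, hau, hγu⟩ := ih
    obtain ⟨v, hv, hmv, hγv⟩ := le_max_in_delta hO k e _ hme
    rcases hmv with rfl | hmv
    · exact ⟨u, hau, by rw [hγu, hγv, hγe]⟩
    · obtain ⟨w, hw, hwv⟩ := Relation.TransGen.head'_iff.mp hmv
      have huw : O.ltm k u v := Relation.TransGen.head' (by rw [hγu]; exact hw) hwv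
      refine ⟨v, Or.inr ?_, by rw [hγv, hγe]⟩
      rcases hau with rfl | hau
      · exact huw
      · exact hau.trans huw

/-- Key descent lemma: if `p` is a non-codomain face with `γ p = γ d` and `p ≤⁺ d`,
then any `c` with `x ∈ δ c` and `c ≤⁻ d` can be replaced by some `c'` with
`x ∈ δ c'` and `c' ≤⁻ p`. -/
lemma lemI (hO : O.IsOpetope) (i : ℕ) {x : O.P i} :
    ∀ d p : O.P (i+1), (¬ ∃ c : O.P (i+2), O.γ (i+1) c = p) →
      O.γ i d = O.γ i p → (p = d ∨ O.ltp (i+1) p d) →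
      ∀ c, x ∈ O.δ i c → (c = d ∨ O.ltm i c d) →
      ∃ c', x ∈ O.δ i c' ∧ (c' = p ∨ O.ltm i c' p) := by
  intro d
  refine (ltp_wf hO (i+1)).induction
    (C := fun d => ∀ p : O.P (i+1), (¬ ∃ c : O.P (i+2), O.γ (i+1) c = p) →
      O.γ i d = O.γ i p → (p = d ∨ O.ltp (i+1) p d) →
      ∀ c, x ∈ O.δ i c → (c = d ∨ O.ltm i c d) →
      ∃ c', x ∈ O.δ i c' ∧ (c' = p ∨ O.ltm i c' p)) d ?_
  clear d; intro d IH p hp hγ hpd c hxc hcd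
  rcases hpd with rfl | hpd
  · exact ⟨c, hxc, hcd⟩
  obtain ⟨m, -, e, -, hγe⟩ := Relation.TransGen.tail'_iff.mp hpd
  -- `d = γ e`
  rcases hcd with rfl | hcd
  · -- `x ∈ δ (γ e)`
    rw [← hγe, hO.glob_δ i e] at hxc
    obtain ⟨⟨w, hwe, hxw⟩, -⟩ := hxc
    obtain ⟨b, hbe, hwb, hγb⟩ := le_max_in_delta hO i e w hwe
    have hγbp : O.γ i b = O.γ i p := by rw [hγb, hγe, hγ]
    have hbc : O.ltp (i+1) b c := Relation.TransGen.single ⟨e, hbe, hγe⟩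
    rcases hO.pencil_γ i b p hγbp with rfl | hlt | hlt
    · exact ⟨w, hxw, hwb⟩
    · exact absurd hlt (fun h => not_ltp_nongamma hp h)
    · exact IH b hbc p hp hγbp (Or.inr hlt) w hxw hwb
  · obtain ⟨y, -, hyd⟩ := Relation.TransGen.tail'_iff.mp hcd
    obtain ⟨y', hcy, hyd'⟩ :
        ∃ y', Relation.ReflTransGen (fun a b => O.γ i a ∈ O.δ i b) c y' ∧
          O.γ i y' ∈ O.δ i d := Relation.TransGen.tail'_iff.mp hcd
    rw [← hγe, hO.glob_δ i e] at hyd'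
    obtain ⟨⟨w, hwe, hyw⟩, -⟩ := hyd'
    obtain ⟨b, hbe, hwb, hγb⟩ := le_max_in_delta hO i e w hwe
    have hγbp : O.γ i b = O.γ i p := by rw [hγb, hγe, hγ]
    have hbd : O.ltp (i+1) b d := Relation.TransGen.single ⟨e, hbe, hγe⟩
    have hcw : O.ltm i c w := Relation.TransGen.tail' hcy hyw
    have hcb : O.ltm i c b := by
      rcases hwb with rfl | hwb
      · exact hcw
      · exact hcw.trans hwb
    rcases hO.pencil_γ i b p hγbp with rfl | hlt | hlt
    · exact ⟨c, hxc, Or.inr hcb⟩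
    · exact absurd hlt (fun h => not_ltp_nongamma hp h)
    · exact IH b hbd p hp hγbp (Or.inr hlt) c hxc (Or.inr hcb)

/-- Chain decomposition of `s <⁺ x`. -/
lemma lemF2 (i : ℕ) {s : O.P i} :
    ∀ x, O.ltp i s x →
      ∃ c d, s ∈ O.δ i c ∧ (c = d ∨ O.ltm i c d) ∧ O.γ i d = x := by
  intro x h
  induction h with
  | single h =>
    obtain ⟨c, hsc, hγ⟩ := h
    exact ⟨c, c, hsc, Or.inl rfl, hγ⟩
  | tail hsm h ih =>
    obtain ⟨q, hmq, hγq⟩ := h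
    obtain ⟨c, d, hsc, hcd, hγd⟩ := ih
    have hdq : O.ltm i d q := Relation.TransGen.single (by rw [hγd]; exact hmq)
    refine ⟨c, q, hsc, Or.inr ?_, hγq⟩
    rcases hcd with rfl | h'
    · exact hdq
    · exact h'.trans hdq

/-- Main comparability lemma. -/
lemma lemC (hO : O.IsOpetope) (i : ℕ) :
    ∀ x : O.P i, ∀ c' c p p' : O.P (i+1),
      (¬ ∃ e : O.P (i+2), O.γ (i+1) e = p) → (¬ ∃ e : O.P (i+2), O.γ (i+1) e = p') →
      x ∈ O.δ i c → x ∈ O.δ i c' →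
      (c = p ∨ O.ltm i c p) → (c' = p' ∨ O.ltm i c' p') →
      p = p' ∨ O.ltm i p p' ∨ O.ltm i p' p := by
  intro x
  refine (flip_ltp_wf hO i).induction
    (C := fun x => ∀ c' c p p' : O.P (i+1),
      (¬ ∃ e : O.P (i+2), O.γ (i+1) e = p) → (¬ ∃ e : O.P (i+2), O.γ (i+1) e = p') →
      x ∈ O.δ i c → x ∈ O.δ i c' →
      (c = p ∨ O.ltm i c p) → (c' = p' ∨ O.ltm i c' p') →
      p = p' ∨ O.ltm i p p' ∨ O.ltm i p' p) x ?_
  clear x; intro x IHx c'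
  refine (ltp_wf hO (i+1)).induction
    (C := fun c' => ∀ c p p' : O.P (i+1),
      (¬ ∃ e : O.P (i+2), O.γ (i+1) e = p) → (¬ ∃ e : O.P (i+2), O.γ (i+1) e = p') →
      x ∈ O.δ i c → x ∈ O.δ i c' →
      (c = p ∨ O.ltm i c p) → (c' = p' ∨ O.ltm i c' p') →
      p = p' ∨ O.ltm i p p' ∨ O.ltm i p' p) c' ?_
  clear c'; intro c' IHc' c
  refine (ltp_wf hO (i+1)).induction
    (C := fun c => ∀ p p' : O.P (i+1),
      (¬ ∃ e : O.P (i+2), O.γ (i+1) e = p) → (¬ ∃ e : O.P (i+2), O.γ (i+1) e = p') →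
      x ∈ O.δ i c → x ∈ O.δ i c' →
      (c = p ∨ O.ltm i c p) → (c' = p' ∨ O.ltm i c' p') →
      p = p' ∨ O.ltm i p p' ∨ O.ltm i p' p) c ?_
  clear c; intro c IHc p p' hp hp' hxc hxc' hcp hcp'
  rcases hO.pencil_δ i x c c' hxc hxc' with rfl | hlt | hlt
  · -- c = c'
    rcases hcp with rfl | hcp
    · rcases hcp' with rfl | h
      · exact Or.inl rfl
      · exact Or.inr (Or.inl h)
    rcases hcp' with rfl | hcp'
    · exact Or.inr (Or.inr hcp)
    obtain ⟨y, hy, hyp⟩ := Relation.TransGen.head'_iff.mp hcp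
    obtain ⟨y', hy', hyp'⟩ := Relation.TransGen.head'_iff.mp hcp'
    exact IHx (O.γ i c) (Relation.TransGen.single ⟨c, hxc, rfl⟩) y' y p p' hp hp'
      hy hy' (rtg_cases hyp) (rtg_cases hyp')
  · -- c <⁺ c' : c' is a codomain face
    obtain ⟨m, -, e, -, hγe⟩ := Relation.TransGen.tail'_iff.mp hlt
    rcases hcp' with rfl | hcp'
    · exact absurd ⟨e, hγe⟩ hp'
    obtain ⟨z, hz, hzp'⟩ := Relation.TransGen.head'_iff.mp hcp'
    have hxc'' := hxc'
    rw [← hγe, hO.glob_δ i e] at hxc''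
    obtain ⟨⟨w, hwe, hxw⟩, -⟩ := hxc''
    obtain ⟨b, hbe, hwb, hγb⟩ := le_max_in_delta hO i e w hwe
    have t1 : O.ltm i b p' :=
      Relation.TransGen.head' (by rw [hγb, hγe]; exact hz) hzp'
    have hwp' : O.ltm i w p' := by
      rcases hwb with rfl | hwb
      · exact t1
      · exact hwb.trans t1
    exact IHc' w (Relation.TransGen.single ⟨e, hwe, hγe⟩) c p p' hp hp' hxc hxw
      hcp (Or.inr hwp')
  · -- c' <⁺ c : c is a codomain face
    obtain ⟨m, -, e, -, hγe⟩ := Relation.TransGen.tail'_iff.mp hlt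
    rcases hcp with rfl | hcp
    · exact absurd ⟨e, hγe⟩ hp
    obtain ⟨z, hz, hzp⟩ := Relation.TransGen.head'_iff.mp hcp
    have hxcc := hxc
    rw [← hγe, hO.glob_δ i e] at hxcc
    obtain ⟨⟨w, hwe, hxw⟩, -⟩ := hxcc
    obtain ⟨b, hbe, hwb, hγb⟩ := le_max_in_delta hO i e w hwe
    have t1 : O.ltm i b p :=
      Relation.TransGen.head' (by rw [hγb, hγe]; exact hz) hzp
    have hwp : O.ltm i w p := by
      rcases hwb with rfl | hwb
      · exact t1
      · exact hwb.trans t1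
    exact IHc w (Relation.TransGen.single ⟨e, hwe, hγe⟩) p p' hp hp' hxw hxc'
      (Or.inr hwp) hcp'

/-- Every codomain is `≤⁺`-below `γ p` when `p` is the `≤⁻`-top of `P*_{i+1}`. -/
lemma claimA (hO : O.IsOpetope) (i : ℕ) (p : O.P (i+1))
    (htop : ∀ q : O.P (i+1), (¬ ∃ c : O.P (i+2), O.γ (i+1) c = q) →
      q = p ∨ O.ltm i q p) :
    ∀ c : O.P (i+1), O.γ i c = O.γ i p ∨ O.ltp i (O.γ i c) (O.γ i p) := by
  intro c
  refine (ltp_wf hO (i+1)).induction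
    (C := fun c => O.γ i c = O.γ i p ∨ O.ltp i (O.γ i c) (O.γ i p)) c ?_
  clear c; intro c IH
  by_cases hc : ∃ d : O.P (i+2), O.γ (i+1) d = c
  · obtain ⟨d, rfl⟩ := hc
    have hgb : ∃ b ∈ O.δ (i+1) d, O.γ i b = O.γ i (O.γ (i+1) d) := by
      have h0 : O.γ i (O.γ (i+1) d) ∈
          ({x : O.P i | x = O.γ i (O.γ (i+1) d)} : Set (O.P i)) := rfl
      rw [hO.glob_γ i d] at h0
      obtain ⟨⟨b, hb, hγb⟩, -⟩ := h0
      exact ⟨b, hb, hγb⟩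
    obtain ⟨b, hbd, hγb⟩ := hgb
    have hb : O.ltp (i+1) b (O.γ (i+1) d) := Relation.TransGen.single ⟨d, hbd, rfl⟩
    rcases IH b hb with h | h
    · left; rw [← hγb, h]
    · right; rw [← hγb]; exact h
  · rcases htop c hc with rfl | h
    · exact Or.inl rfl
    · exact Or.inr (ltm_gamma i h)

/-- Every non-codomain `i`-face lies in some `δ c`. -/
lemma claimB (hO : O.IsOpetope) (i : ℕ) (p : O.P (i+1)) {s : O.P i}
    (hs : ¬ ∃ c : O.P (i+1), O.γ i c = s) : ∃ c : O.P (i+1), s ∈ O.δ i c := by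
  by_contra hns
  have hns' : ¬ ∃ c : O.P (i+1), s ∈ O.δ i c := hns
  have key : ∀ t : O.P i, (∃ c : O.P (i+1), O.γ i c = t) →
      ∃ t' : O.P i, (∃ c : O.P (i+1), O.γ i c = t') ∧
        ¬ ∃ c : O.P (i+1), t' ∈ O.δ i c := by
    intro t
    refine (flip_ltp_wf hO i).induction
      (C := fun t => (∃ c : O.P (i+1), O.γ i c = t) →
        ∃ t' : O.P i, (∃ c : O.P (i+1), O.γ i c = t') ∧
          ¬ ∃ c : O.P (i+1), t' ∈ O.δ i c) t ?_
    clear t; intro t IH ht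
    by_cases h : ∃ c : O.P (i+1), t ∈ O.δ i c
    · obtain ⟨c, hc⟩ := h
      exact IH (O.γ i c) (Relation.TransGen.single ⟨c, hc, rfl⟩) ⟨c, rfl⟩
    · exact ⟨t, ht, h⟩
  obtain ⟨t', hγt', ht'⟩ := key (O.γ i p) ⟨p, rfl⟩
  have hst : s = t' := hO.size i s t' hns' ht'
  exact hs (hst ▸ hγt')

end PreOpetope


/-- Let `P` be a positive opetope.  The map `π_i : P*_{i+1} → St(P*_i)` is a
constellation: it is monotone w.r.t. `≤⁻`, it sends the top of `(P*_{i+1}, ≤⁻)` to all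
of `P*_i`, and any two elements of `P*_{i+1}` with intersecting images are
`⊥⁻`-comparable. -/
theorem stmt_13 (O : PreOpetope) (hO : O.IsOpetope) (i : ℕ) :
    (∀ p p' : O.P (i+1),
      (¬ ∃ c : O.P (i+2), O.γ (i+1) c = p) → (¬ ∃ c : O.P (i+2), O.γ (i+1) c = p') →
      O.ltm i p p' → O.piFace i p ⊆ O.piFace i p') ∧
    (∀ p : O.P (i+1), (¬ ∃ c : O.P (i+2), O.γ (i+1) c = p) →
      (∀ q : O.P (i+1), (¬ ∃ c : O.P (i+2), O.γ (i+1) c = q) → q = p ∨ O.ltm i q p) →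
      O.piFace i p = {s : O.P i | ¬ ∃ c : O.P (i+1), O.γ i c = s}) ∧
    (∀ p p' : O.P (i+1),
      (¬ ∃ c : O.P (i+2), O.γ (i+1) c = p) → (¬ ∃ c : O.P (i+2), O.γ (i+1) c = p') →
      (O.piFace i p ∩ O.piFace i p').Nonempty →
      p = p' ∨ O.ltm i p p' ∨ O.ltm i p' p) := by
  refine ⟨?_, ?_, ?_⟩
  · intro p p' _ _ h s hs
    exact ⟨hs.1, hs.2.trans (PreOpetope.ltm_gamma i h)⟩
  · intro p hp htop
    apply Set.eq_of_subset_of_subset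
    · intro s hs
      exact hs.1
    · intro s hs
      refine ⟨hs, ?_⟩
      obtain ⟨c, hsc⟩ := PreOpetope.claimB hO i p hs
      have h1 : O.ltp i s (O.γ i c) := Relation.TransGen.single ⟨c, hsc, rfl⟩
      rcases PreOpetope.claimA hO i p htop c with h | h
      · rw [← h]; exact h1
      · exact h1.trans h
  · rintro p p' hp hp' ⟨s, hsp, hsp'⟩
    obtain ⟨hs1, hs2⟩ := hsp
    obtain ⟨-, hs2'⟩ := hsp'
    obtain ⟨c, d, hsc, hcd, hγd⟩ := PreOpetope.lemF2 i _ hs2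
    obtain ⟨c2, d2, hsc2, hcd2, hγd2⟩ := PreOpetope.lemF2 i _ hs2'
    have hcp : ∃ cp, s ∈ O.δ i cp ∧ (cp = p ∨ O.ltm i cp p) := by
      rcases hO.pencil_γ i d p hγd with rfl | h | h
      · exact ⟨c, hsc, hcd⟩
      · exact absurd h (fun h => PreOpetope.not_ltp_nongamma hp h)
      · exact PreOpetope.lemI hO i d p hp hγd (Or.inr h) c hsc hcd
    have hcp' : ∃ cq, s ∈ O.δ i cq ∧ (cq = p' ∨ O.ltm i cq p') := by
      rcases hO.pencil_γ i d2 p' hγd2 with rfl | h | h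
      · exact ⟨c2, hsc2, hcd2⟩
      · exact absurd h (fun h => PreOpetope.not_ltp_nongamma hp' h)
      · exact PreOpetope.lemI hO i d2 p' hp' hγd2 (Or.inr h) c2 hsc2 hcd2
    obtain ⟨cp, hscp, hcpp⟩ := hcp
    obtain ⟨cq, hscq, hcqq⟩ := hcp'
    exact PreOpetope.lemC hO i s cq cp p p' hp hp' hscp hscq hcpp hcqq
end

section
/- Let (S, σ) be a tree complex. Then the face structure S* = (S*_i, γ, δ), with S*_i = S_{i+1} ◁_{σ_i} S_i, γ(p) = sup(lvs(p)°), δ(p) = cvr(lvs(p)°), is a positive opetope: it satisfies globularity, strictness, disjointness and pencil linearity, and has exactly one maximal face in each dimension up to dim(S). -/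
/-- The constellation order on `S₁ ⊔ S₀` (`inl` = inner nodes/circles from `S₁`,
`inr` = vertices/leaves from `S₀`), relative to a relation `r` on `S₁` and a
constellation map `σ : S₁ → St(S₀)`. -/
def coRel {α β : Type*} (r : α → α → Prop) (σ : α → Set β) : α ⊕ β → α ⊕ β → Prop
  | Sum.inl s, Sum.inl t => r s t
  | Sum.inr s, Sum.inl t => s ∈ σ t
  | Sum.inr s, Sum.inr t => s = t
  | Sum.inl _, Sum.inr _ => False

/-- A tree complex: a sequence of trees `S i` (empty above the dimension `n`, singletons
in dimensions `0` and `n`) together with a sequence of constellations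
`σ i : S (i+1) → St(S i)`. -/
structure TreeComplex where
  n : ℕ
  S : ℕ → Type
  le : ∀ i, S i → S i → Prop
  σ : ∀ i, S (i+1) → Set (S i)
  refl : ∀ i (x : S i), le i x x
  trans : ∀ i (x y z : S i), le i x y → le i y z → le i x z
  antisymm : ∀ i (x y : S i), le i x y → le i y x → x = y
  fin : ∀ i, Finite (S i)
  nonemp : ∀ i, i ≤ n → Nonempty (S i)
  empty : ∀ i, n < i → IsEmpty (S i)
  sups : ∀ i, i ≤ n → ∀ a b : S i,
    ∃ c, le i a c ∧ le i b c ∧ ∀ d, le i a d → le i b d → le i c d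
  comp : ∀ i (x a b : S i), le i x a → le i x b → le i a b ∨ le i b a
  zero_sub : ∀ a b : S 0, a = b
  top_sub : ∀ a b : S n, a = b
  σ_convex : ∀ i (p : S (i+1)),
    (∃ m ∈ σ i p, ∀ x ∈ σ i p, le i x m) ∧
    ∀ x ∈ σ i p, ∀ x' ∈ σ i p, ∀ s, le i x s → le i s x' → s ∈ σ i p
  σ_mono : ∀ i (p q : S (i+1)), le (i+1) p q → σ i p ⊆ σ i q
  σ_top : ∀ i (m : S (i+1)), (∀ x, le (i+1) x m) → σ i m = Set.univ
  σ_comp : ∀ i (p q : S (i+1)), (σ i p ∩ σ i q).Nonempty →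
    le (i+1) p q ∨ le (i+1) q p

namespace TreeComplex

variable (T : TreeComplex)

/-- The constellation order on `S*_i = S_{i+1} ◁ S_i`. -/
def coStar (i : ℕ) : (T.S (i+1) ⊕ T.S i) → (T.S (i+1) ⊕ T.S i) → Prop :=
  coRel (T.le (i+1)) (T.σ i)

/-- `lvs(p)°`: the set of leaves of `S*_{i+1}` below `p`, regarded as circles in
`S*_i`. -/
def lvsC (i : ℕ) (p : T.S (i+2) ⊕ T.S (i+1)) : Set (T.S (i+1) ⊕ T.S i) :=
  {x | ∃ t : T.S (i+1), x = Sum.inl t ∧ T.coStar (i+1) (Sum.inr t) p}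

/-- The immediate-predecessor (cover) relation of the constellation order on `S*_i`. -/
def covC (i : ℕ) (x y : T.S (i+1) ⊕ T.S i) : Prop :=
  T.coStar i x y ∧ x ≠ y ∧
    ∀ z, T.coStar i x z → T.coStar i z y → z = x ∨ z = y

/-- The domain `δ(p) = cvr(lvs(p)°)` in `S*_i`. -/
def δStar (i : ℕ) (p : T.S (i+2) ⊕ T.S (i+1)) : Set (T.S (i+1) ⊕ T.S i) :=
  {s | s ∉ T.lvsC i p ∧ ∃ x ∈ T.lvsC i p, T.covC i s x}

/-- `g` is the codomain `γ(p) = sup(lvs(p)°)` of `p`: the least upper bound in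
`(S*_i, ≤^co)` of the set `lvs(p)°`. -/
def IsGammaOf (i : ℕ) (p : T.S (i+2) ⊕ T.S (i+1)) (g : T.S (i+1) ⊕ T.S i) : Prop :=
  (∀ x ∈ T.lvsC i p, T.coStar i x g) ∧
    ∀ u, (∀ x ∈ T.lvsC i p, T.coStar i x u) → T.coStar i g u

end TreeComplex

/-!
Each `S*_i` carries the constellation order: a finite partial order in which every principal
up-set is a chain. There `lvs(p)°` is order-convex with a greatest element, so `γ(p)` is that
maximum, and `δ(p)` consists of the lower covers of `lvs(p)°`.

The key fact is that for `a ∈ S*_{i+2}` the sets `lvs(b)°`, `b ∈ δ(a)`, partition `lvs(γ(a))°`: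
a leaf `inl v` below `γ(a)` comes from the vertex `inr v ∉ lvs(a)°`, and climbing from `inr v`
towards `γ(a)` leaves `lvs(a)°` through some `b ∈ δ(a)`; disjointness holds because `δ(a)` is
an antichain while faces sharing a leaf are comparable. Globularity is then a general statement
about lower covers of a disjoint union of convex sets. The upper order `<⁺` is the strict
constellation order, as each cover `x ⋖ inl t` is the step `x ∈ δ(inr t)`, `γ(inr t) = inl t`;
and the faces lying in no `δ` are exactly the maximal elements, which are unique because
`inl` of the top of `S_{i+1}` is a top of `S*_i` (and `S*_n = S_n` is a singleton).
-/

lemma CovBy.eq_of_covBy_of_isChain_Ici {α : Type*} [PartialOrder α]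
    (hα : ∀ x : α, IsChain (· ≤ ·) (Set.Ici x)) {x a b : α} (ha : x ⋖ a) (hb : x ⋖ b) : a = b := by
  rcases (hα x).total ha.le hb.le with hab | hba
  · exact (hb.eq_or_eq ha.le hab).resolve_left ha.ne'
  · exact ((ha.eq_or_eq hb.le hba).resolve_left hb.ne').symm

namespace Set

variable {α : Type*} [PartialOrder α] {X : Set α} {s x m g : α}

/-- The paper's `cvr X`. -/
def lowerCover (X : Set α) : Set α := {s | s ∉ X ∧ ∃ x ∈ X, s ⋖ x}

lemma lt_of_mem_lowerCover (hg : IsGreatest X g) (hs : s ∈ X.lowerCover) : s < g := by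
  obtain ⟨-, x, hx, hsx⟩ := hs
  exact hsx.lt.trans_le (hg.2 hx)

lemma exists_mem_lowerCover_ge [Finite α] (hm : m ∈ X) (hxm : x ≤ m) (hx : x ∉ X) :
    ∃ b ∈ X.lowerCover, x ≤ b := by
  obtain ⟨b, hxb, ⟨hbm, hbX⟩, hb⟩ :=
    (Set.toFinite {t | t ≤ m ∧ t ∉ X}).exists_le_maximal (a := x) ⟨hxm, hx⟩
  obtain ⟨w, hbw, hwm⟩ := exists_covBy_le_of_lt (hbm.lt_of_ne fun h => hbX (h ▸ hm))
  refine ⟨b, ⟨hbX, w, ?_, hbw⟩, hxb⟩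
  by_contra hwX
  exact hbw.lt.not_ge (hb ⟨hwm, hwX⟩ hbw.le)

lemma isAntichain_lowerCover (hα : ∀ x : α, IsChain (· ≤ ·) (Ici x)) (hX : X.OrdConnected) :
    IsAntichain (· ≤ ·) X.lowerCover := by
  rintro b ⟨-, w, hw, hbw⟩ b' ⟨hb'X, w', hw', hb'w'⟩ hne hbb'
  rcases (hα b).total hbw.le hbb' with hwb' | hb'w
  · exact hb'X (hX.out hw hw' ⟨hwb', hb'w'.le⟩)
  · rcases hbw.eq_or_eq hbb' hb'w with rfl | rfl
    · exact hne rfl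
    · exact hb'X hw

section Partition

variable {ι : Type*} {B : Set ι} {L : ι → Set α} {g : ι → α} {L₀ : Set α} {g₀ : α}

lemma singleton_eq_image_diff_lowerCover [IsStronglyAtomic α] (hdisj : B.PairwiseDisjoint L)
    (hL : ⋃ b ∈ B, L b = L₀) (hg : ∀ b ∈ B, IsGreatest (L b) (g b)) (hg₀ : IsGreatest L₀ g₀)
    (hL₀ : L₀.OrdConnected) :
    {g₀} = g '' B \ ⋃ b ∈ B, (L b).lowerCover := by
  have hsub : ∀ b ∈ B, L b ⊆ L₀ := fun b hb => hL ▸ subset_biUnion_of_mem hb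
  have hmem : ∀ {y}, y ∈ L₀ → ∃ b ∈ B, y ∈ L b := fun hy => by
    simpa only [← hL, mem_iUnion, exists_prop] using hy
  ext x
  simp only [mem_singleton_iff, mem_sdiff, mem_image, mem_iUnion, exists_prop, not_exists,
    not_and]
  constructor
  · rintro rfl
    obtain ⟨b, hb, hg₀b⟩ := hmem hg₀.1
    refine ⟨⟨b, hb, le_antisymm (hg₀.2 (hsub b hb (hg b hb).1)) ((hg b hb).2 hg₀b)⟩, ?_⟩
    rintro b' hb' ⟨-, z, hz, hg₀z⟩
    exact hg₀z.lt.not_ge (hg₀.2 (hsub b' hb' hz))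
  · rintro ⟨⟨b, hb, rfl⟩, hcov⟩
    by_contra hne
    have hlt : g b < g₀ := (hg₀.2 (hsub b hb (hg b hb).1)).lt_of_ne hne
    obtain ⟨y, hgy, hyg₀⟩ := exists_covBy_le_of_lt hlt
    obtain ⟨b', hb', hyb'⟩ := hmem (hL₀.out (hsub b hb (hg b hb).1) hg₀.1 ⟨hgy.le, hyg₀⟩)
    refine hcov b' hb' ⟨fun hgb' => ?_, y, hyb', hgy⟩
    obtain rfl : b = b' := hdisj.elim hb hb' (not_disjoint_iff.2 ⟨g b, (hg b hb).1, hgb'⟩)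
    exact hgy.lt.not_ge ((hg b hb).2 hyb')

lemma lowerCover_eq_biUnion_diff_image (hα : ∀ x : α, IsChain (· ≤ ·) (Ici x))
    (hdisj : B.PairwiseDisjoint L) (hL : ⋃ b ∈ B, L b = L₀)
    (hg : ∀ b ∈ B, IsGreatest (L b) (g b)) (hconv : ∀ b ∈ B, (L b).OrdConnected) :
    L₀.lowerCover = (⋃ b ∈ B, (L b).lowerCover) \ g '' B := by
  have hsub : ∀ b ∈ B, L b ⊆ L₀ := fun b hb => hL ▸ subset_biUnion_of_mem hb
  have hmem : ∀ {y}, y ∈ L₀ → ∃ b ∈ B, y ∈ L b := fun hy => by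
    simpa only [← hL, mem_iUnion, exists_prop] using hy
  ext s
  simp only [mem_sdiff, mem_image, mem_iUnion, exists_prop, not_exists, not_and]
  constructor
  · rintro ⟨hsL₀, z, hz, hsz⟩
    obtain ⟨b, hb, hzb⟩ := hmem hz
    exact ⟨⟨b, hb, fun hsb => hsL₀ (hsub b hb hsb), z, hzb, hsz⟩,
      fun b' hb' hgs => hsL₀ (hgs ▸ hsub b' hb' (hg b' hb').1)⟩
  · rintro ⟨⟨b, hb, hsb, z, hzb, hsz⟩, hng⟩
    refine ⟨fun hs => ?_, z, hsub b hb hzb, hsz⟩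
    obtain ⟨b', hb', hsb'⟩ := hmem hs
    have hbb' : b ≠ b' := fun h => hsb (h ▸ hsb')
    rcases (hα s).total hsz.le ((hg b' hb').2 hsb') with hzg | hgz
    · exact hdisj hb hb' hbb' |>.ne_of_mem hzb
        ((hconv b' hb').out hsb' (hg b' hb').1 ⟨hsz.le, hzg⟩) rfl
    · rcases hsz.eq_or_eq ((hg b' hb').2 hsb') hgz with h | h
      · exact hng b' hb' h
      · exact hdisj hb hb' hbb' |>.ne_of_mem hzb (h ▸ (hg b' hb').1) rfl

end Partition

end Set

namespace TreeComplex

open Sum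

variable (T : TreeComplex)

instance instFiniteS (i : ℕ) : Finite (T.S i) := T.fin i

instance instPartialOrderStar (i : ℕ) : PartialOrder (T.S (i+1) ⊕ T.S i) where
  le := T.coStar i
  le_refl
    | inl a => T.refl _ a
    | inr a => rfl
  le_trans
    | inl a, inl b, inl c, hab, hbc => T.trans _ a b c hab hbc
    | inr a, inl b, inl c, hab, hbc => T.σ_mono i b c hbc hab
    | inr a, inr b, inl c, hab, hbc => (show a = b from hab) ▸ hbc
    | inr a, inr b, inr c, hab, hbc => (show a = b from hab).trans hbc
  le_antisymm
    | inl a, inl b, hab, hba => congrArg inl (T.antisymm _ a b hab hba)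
    | inr a, inr b, hab, _ => congrArg inr hab

variable {T} {i : ℕ}

@[simp] lemma inr_le_inl {a : T.S i} {b : T.S (i+1)} :
    (inr a : T.S (i+1) ⊕ T.S i) ≤ inl b ↔ a ∈ T.σ i b := Iff.rfl

@[simp] lemma inr_le_inr {a b : T.S i} : (inr a : T.S (i+1) ⊕ T.S i) ≤ inr b ↔ a = b := Iff.rfl

@[simp] lemma not_inl_le_inr {a : T.S (i+1)} {b : T.S i} :
    ¬ (inl a : T.S (i+1) ⊕ T.S i) ≤ inr b := id

lemma isChain_Ici (x : T.S (i+1) ⊕ T.S i) : IsChain (· ≤ ·) (Set.Ici x) := by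
  rintro a hxa b hxb -
  match x, a, b, hxa, hxb with
  | inl c, inl a, inl b, hxa, hxb => exact T.comp _ c a b hxa hxb
  | inr v, inl a, inl b, hxa, hxb => exact T.σ_comp i a b ⟨v, hxa, hxb⟩
  | inr v, inl a, inr b, hxa, hxb => exact Or.inr (inr_le_inr.1 hxb ▸ hxa)
  | inr v, inr a, inl b, hxa, hxb => exact Or.inl (inr_le_inr.1 hxa ▸ hxb)
  | inr v, inr a, inr b, hxa, hxb =>
    exact Or.inl (inr_le_inr.2 ((inr_le_inr.1 hxa).symm.trans hxb))

lemma exists_eq_inl_of_lt {x y : T.S (i+1) ⊕ T.S i} (h : x < y) : ∃ t, y = inl t := by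
  rcases y with t | v
  · exact ⟨t, rfl⟩
  · rcases x with a | a
    · exact absurd h.le not_inl_le_inr
    · exact absurd (congrArg inr (inr_le_inr.1 h.le)) h.ne

lemma isBot_inr_zero (v : T.S 0) : IsBot (inr v : T.S 1 ⊕ T.S 0)
  | inl t => by
    obtain ⟨⟨w, hw, -⟩, -⟩ := T.σ_convex 0 t
    exact T.zero_sub w v ▸ hw
  | inr w => T.zero_sub v w

lemma le_total_zero (x y : T.S 1 ⊕ T.S 0) : x ≤ y ∨ y ≤ x := by
  obtain ⟨v⟩ := T.nonemp 0 (Nat.zero_le _)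
  exact (isChain_Ici (inr v)).total (isBot_inr_zero v x) (isBot_inr_zero v y)

section Leaves

variable {p q : T.S (i+2) ⊕ T.S (i+1)} {x : T.S (i+1) ⊕ T.S i}

lemma mem_lvsC : x ∈ T.lvsC i p ↔ ∃ t, x = inl t ∧ inr t ≤ p := Iff.rfl

@[simp] lemma inl_mem_lvsC {t : T.S (i+1)} : inl t ∈ T.lvsC i p ↔ inr t ≤ p := by
  simp [mem_lvsC]

lemma inr_notMem_lvsC {v : T.S i} : inr v ∉ T.lvsC i p := by
  simp [mem_lvsC]

lemma lvsC_inr (t : T.S (i+1)) : T.lvsC i (inr t) = {inl t} := by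
  ext x
  simp [mem_lvsC, eq_comm]

lemma lvsC_mono : Monotone (T.lvsC i) := by
  intro p q hpq x hx
  obtain ⟨t, rfl, ht⟩ := mem_lvsC.1 hx
  exact inl_mem_lvsC.2 (ht.trans hpq)

lemma ordConnected_lvsC (p : T.S (i+2) ⊕ T.S (i+1)) : (T.lvsC i p).OrdConnected := by
  refine ⟨?_⟩
  rintro _ ⟨a, rfl, ha⟩ _ ⟨b, rfl, hb⟩ (c | c) ⟨hac, hcb⟩
  · rcases p with r | t
    · exact inl_mem_lvsC.2 ((T.σ_convex (i+1) r).2 a ha b hb c hac hcb)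
    · exact inl_mem_lvsC.2 (inr_le_inr.2
        (T.antisymm _ c t (inr_le_inr.1 hb ▸ hcb) (inr_le_inr.1 ha ▸ hac)))
  · exact absurd hac not_inl_le_inr

lemma exists_isGreatest_lvsC (p : T.S (i+2) ⊕ T.S (i+1)) : ∃ g, IsGreatest (T.lvsC i p) g := by
  rcases p with r | t
  · obtain ⟨m, hm, hmax⟩ := (T.σ_convex (i+1) r).1
    exact ⟨inl m, inl_mem_lvsC.2 hm, fun _ ⟨t, h, ht⟩ => h ▸ hmax t ht⟩
  · exact ⟨inl t, lvsC_inr t ▸ isGreatest_singleton⟩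

lemma le_or_ge_of_mem_lvsC (hp : x ∈ T.lvsC i p) (hq : x ∈ T.lvsC i q) : p ≤ q ∨ q ≤ p := by
  obtain ⟨t, rfl, htp⟩ := hp
  exact (isChain_Ici (inr t)).total htp (inl_mem_lvsC.1 hq)

end Leaves

variable (T) in
noncomputable def γStar (i : ℕ) (p : T.S (i+2) ⊕ T.S (i+1)) : T.S (i+1) ⊕ T.S i :=
  (exists_isGreatest_lvsC p).choose

lemma isGreatest_γStar (p : T.S (i+2) ⊕ T.S (i+1)) : IsGreatest (T.lvsC i p) (T.γStar i p) :=
  (exists_isGreatest_lvsC p).choose_spec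

lemma IsGammaOf.eq_γStar {p : T.S (i+2) ⊕ T.S (i+1)} {g : T.S (i+1) ⊕ T.S i}
    (h : T.IsGammaOf i p g) : g = T.γStar i p :=
  IsLUB.unique h (isGreatest_γStar p).isLUB

lemma γStar_inr (t : T.S (i+1)) : T.γStar i (inr t) = inl t := by
  simpa [lvsC_inr] using (isGreatest_γStar (T := T) (inr t)).1

lemma covC_iff_covBy {x y : T.S (i+1) ⊕ T.S i} : T.covC i x y ↔ x ⋖ y :=
  ⟨fun ⟨hle, hne, h⟩ => covBy_of_eq_or_eq (lt_of_le_of_ne hle hne) h,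
    fun h => ⟨h.le, h.ne, fun _ => h.eq_or_eq⟩⟩

lemma δStar_eq_lowerCover (p : T.S (i+2) ⊕ T.S (i+1)) :
    T.δStar i p = (T.lvsC i p).lowerCover := by
  ext s
  simp only [δStar, Set.lowerCover, covC_iff_covBy]

lemma mem_δStar_iff {p : T.S (i+2) ⊕ T.S (i+1)} {s : T.S (i+1) ⊕ T.S i} :
    s ∈ T.δStar i p ↔ s ∉ T.lvsC i p ∧ ∃ x ∈ T.lvsC i p, s ⋖ x := by
  rw [δStar_eq_lowerCover]; rfl

lemma lt_γStar_of_mem_δStar {p : T.S (i+2) ⊕ T.S (i+1)} {s : T.S (i+1) ⊕ T.S i}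
    (h : s ∈ T.δStar i p) : s < T.γStar i p :=
  Set.lt_of_mem_lowerCover (isGreatest_γStar p) (δStar_eq_lowerCover p ▸ h)

lemma mem_δStar_inr_of_covBy {a : T.S (i+1) ⊕ T.S i} {t : T.S (i+1)} (h : a ⋖ inl t) :
    a ∈ T.δStar i (inr t) := by
  rw [δStar_eq_lowerCover, lvsC_inr]
  exact ⟨h.ne, inl t, rfl, h⟩

lemma not_exists_mem_δStar_iff_isMax {a : T.S (i+1) ⊕ T.S i} :
    (¬ ∃ c, a ∈ T.δStar i c) ↔ IsMax a := by
  refine ⟨fun h y hay => ?_, fun ha ⟨c, hc⟩ => (lt_γStar_of_mem_δStar hc).not_isMax ha⟩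
  by_contra hya
  obtain ⟨z, haz, -⟩ := exists_covBy_le_of_lt (lt_of_le_not_ge hay hya)
  obtain ⟨t, rfl⟩ := exists_eq_inl_of_lt haz.lt
  exact h ⟨_, mem_δStar_inr_of_covBy haz⟩

lemma δStar_nonempty (p : T.S (i+2) ⊕ T.S (i+1)) : (T.δStar i p).Nonempty := by
  obtain ⟨t, ht, -⟩ := mem_lvsC.1 (isGreatest_γStar p).1
  obtain ⟨⟨v, hv, -⟩, -⟩ := T.σ_convex i t
  obtain ⟨b, hb, -⟩ := Set.exists_mem_lowerCover_ge (isGreatest_γStar p).1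
    (ht ▸ inr_le_inl.2 hv : inr v ≤ T.γStar i p) inr_notMem_lvsC
  exact ⟨b, δStar_eq_lowerCover p ▸ hb⟩

lemma pairwiseDisjoint_lvsC_δStar (a : T.S (i+3) ⊕ T.S (i+2)) :
    (T.δStar (i+1) a).PairwiseDisjoint (T.lvsC i) := by
  have hanti := Set.isAntichain_lowerCover isChain_Ici (ordConnected_lvsC a)
  rw [← δStar_eq_lowerCover] at hanti
  intro b hb b' hb' hne
  refine Set.disjoint_left.2 fun x hxb hxb' => ?_
  exact (le_or_ge_of_mem_lvsC hxb hxb').elim (hanti hb hb' hne) (hanti hb' hb hne.symm)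

lemma biUnion_lvsC_δStar (a : T.S (i+3) ⊕ T.S (i+2)) :
    ⋃ b ∈ T.δStar (i+1) a, T.lvsC i b = T.lvsC i (T.γStar (i+1) a) := by
  refine subset_antisymm
    (Set.iUnion₂_subset fun b hb => lvsC_mono (lt_γStar_of_mem_δStar hb).le) fun y hy => ?_
  obtain ⟨v, rfl, hv⟩ := mem_lvsC.1 hy
  obtain ⟨b, hb, hvb⟩ :=
    Set.exists_mem_lowerCover_ge (isGreatest_γStar a).1 hv inr_notMem_lvsC
  exact Set.mem_biUnion (δStar_eq_lowerCover a ▸ hb) (inl_mem_lvsC.2 hvb)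

lemma singleton_γStar_γStar (a : T.S (i+3) ⊕ T.S (i+2)) :
    {T.γStar i (T.γStar (i+1) a)} =
      T.γStar i '' T.δStar (i+1) a \ ⋃ b ∈ T.δStar (i+1) a, T.δStar i b := by
  simp only [δStar_eq_lowerCover (i := i)]
  exact Set.singleton_eq_image_diff_lowerCover (pairwiseDisjoint_lvsC_δStar a)
    (biUnion_lvsC_δStar a) (fun b _ => isGreatest_γStar b) (isGreatest_γStar _)
    (ordConnected_lvsC _)

lemma δStar_γStar (a : T.S (i+3) ⊕ T.S (i+2)) :
    T.δStar i (T.γStar (i+1) a) =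
      (⋃ b ∈ T.δStar (i+1) a, T.δStar i b) \ T.γStar i '' T.δStar (i+1) a := by
  simp only [δStar_eq_lowerCover (i := i)]
  exact Set.lowerCover_eq_biUnion_diff_image isChain_Ici (pairwiseDisjoint_lvsC_δStar a)
    (biUnion_lvsC_δStar a) (fun b _ => isGreatest_γStar b) (fun b _ => ordConnected_lvsC b)

variable (T) in
noncomputable abbrev toPreOpetope : PreOpetope :=
  ⟨fun k => T.S (k+1) ⊕ T.S k, T.γStar, T.δStar⟩

lemma toPreOpetope_ltp_iff {a b : T.S (i+1) ⊕ T.S i} : T.toPreOpetope.ltp i a b ↔ a < b := by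
  let _ : LocallyFiniteOrder (T.S (i+1) ⊕ T.S i) :=
    .ofFiniteIcc fun a b => Set.toFinite (Set.Icc a b)
  refine ⟨fun h => Relation.transGen_minimal (r' := (· < ·)) ?_ _ _ h, fun h => ?_⟩
  · rintro x _ ⟨c, hc, rfl⟩
    exact lt_γStar_of_mem_δStar hc
  · refine Relation.TransGen.mono (fun x y hxy => ?_) _ _ (transGen_covBy_of_lt h)
    obtain ⟨t, rfl⟩ := exists_eq_inl_of_lt hxy.lt
    exact ⟨inr t, mem_δStar_inr_of_covBy hxy, γStar_inr t⟩

lemma eq_or_ltp_or_ltp_of_le_or_ge {a b : T.S (i+1) ⊕ T.S i} (h : a ≤ b ∨ b ≤ a) :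
    a = b ∨ T.toPreOpetope.ltp i a b ∨ T.toPreOpetope.ltp i b a := by
  rcases eq_or_ne a b with hab | hab
  · exact Or.inl hab
  · simp only [toPreOpetope_ltp_iff]
    exact Or.inr (h.imp (lt_of_le_of_ne · hab) (lt_of_le_of_ne · hab.symm))

lemma γStar_lt_of_ltm {a b : T.S (i+2) ⊕ T.S (i+1)} (h : T.toPreOpetope.ltm i a b) :
    T.γStar i a < T.γStar i b ∧ T.γStar i a ∉ T.lvsC i b := by
  induction h with
  | single h => exact ⟨lt_γStar_of_mem_δStar h, (mem_δStar_iff.1 h).1⟩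
  | @tail c d _ h ih =>
    obtain ⟨hc, z, hz, hcz⟩ := mem_δStar_iff.1 h
    exact ⟨ih.1.trans (lt_γStar_of_mem_δStar h),
      fun ha => hc ((ordConnected_lvsC d).out ha hz ⟨ih.1.le, hcz.le⟩)⟩

lemma not_ltm_of_le_or_ge {a b : T.S (i+2) ⊕ T.S (i+1)} (hab : a ≤ b ∨ b ≤ a) :
    ¬ T.toPreOpetope.ltm i a b := by
  intro h
  obtain ⟨hlt, hnot⟩ := γStar_lt_of_ltm h
  rcases hab with hab | hba
  · exact hnot (lvsC_mono hab (isGreatest_γStar a).1)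
  · exact hlt.not_ge ((isGreatest_γStar a).2 (lvsC_mono hba (isGreatest_γStar b).1))

lemma le_or_ge_of_γStar_eq {a b : T.S (i+2) ⊕ T.S (i+1)} (h : T.γStar i a = T.γStar i b) :
    a ≤ b ∨ b ≤ a :=
  le_or_ge_of_mem_lvsC (isGreatest_γStar a).1 (h ▸ (isGreatest_γStar b).1)

lemma le_or_ge_of_mem_δStar {x : T.S (i+1) ⊕ T.S i} {a b : T.S (i+2) ⊕ T.S (i+1)}
    (ha : x ∈ T.δStar i a) (hb : x ∈ T.δStar i b) : a ≤ b ∨ b ≤ a := by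
  obtain ⟨-, y, hy, hxy⟩ := mem_δStar_iff.1 ha
  obtain ⟨-, y', hy', hxy'⟩ := mem_δStar_iff.1 hb
  exact le_or_ge_of_mem_lvsC hy (hxy.eq_of_covBy_of_isChain_Ici isChain_Ici hxy' ▸ hy')

lemma existsUnique_mem_δStar_zero (a : T.S 2 ⊕ T.S 1) : ∃! x, x ∈ T.δStar 0 a := by
  obtain ⟨x, hx⟩ := δStar_nonempty a
  have hanti := Set.isAntichain_lowerCover isChain_Ici (ordConnected_lvsC a)
  rw [← δStar_eq_lowerCover] at hanti
  exact ⟨x, hx, fun y hy =>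
    (le_total_zero y x).elim (hanti.eq hy hx) fun h => (hanti.eq hx hy h).symm⟩

lemma exists_isTop {j : ℕ} (hj : j ≤ T.n) : ∃ m, ∀ x, T.le j x m := by
  let _ : PartialOrder (T.S j) :=
    { le := T.le j, le_refl := T.refl j, le_trans := T.trans j, le_antisymm := T.antisymm j }
  have := T.nonemp j hj
  obtain ⟨m, -, hm⟩ := Set.finite_univ.exists_maximal (Set.univ_nonempty (α := T.S j))
  refine ⟨m, fun x => ?_⟩
  obtain ⟨c, hxc, hmc, -⟩ := T.sups j hj x m
  exact T.trans j _ _ _ hxc (hm trivial hmc)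

lemma eq_of_isMax {a b : T.S (i+1) ⊕ T.S i} (ha : IsMax a) (hb : IsMax b) : a = b := by
  rcases lt_or_ge i T.n with hi | hi
  · obtain ⟨m, hm⟩ := exists_isTop (T := T) (Nat.succ_le_of_lt hi)
    have htop : IsTop (inl m : T.S (i+1) ⊕ T.S i)
      | inl t => hm t
      | inr v => by simp [T.σ_top i m hm]
    exact (ha.eq_of_le (htop a)).trans (hb.eq_of_le (htop b)).symm
  · have := T.empty (i+1) (Nat.lt_succ_of_le hi)
    rcases a with a | a
    · exact isEmptyElim a
    rcases b with b | b
    · exact isEmptyElim b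
    obtain rfl : i = T.n := le_antisymm (not_lt.1 fun h => (T.empty i h).false a) hi
    exact congrArg inr (T.top_sub a b)

lemma exists_isMax {l : ℕ} (hl : l ≤ T.n) : ∃ a : T.S (l+1) ⊕ T.S l, IsMax a := by
  obtain ⟨v⟩ := T.nonemp l hl
  obtain ⟨a, -, ha⟩ := Set.finite_univ.exists_maximal ⟨(inr v : T.S (l+1) ⊕ T.S l), trivial⟩
  exact ⟨a, fun _ => ha trivial⟩

variable (T) in
theorem isOpetope : T.toPreOpetope.IsOpetope where
  fin _ := inferInstance
  bounded := ⟨T.n, fun k hk =>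
    have := T.empty k hk
    have := T.empty (k+1) (Nat.lt_succ_of_lt hk)
    inferInstance⟩
  ne := ⟨inr (T.nonemp 0 (Nat.zero_le _)).some⟩
  pos _ := δStar_nonempty
  δzero := existsUnique_mem_δStar_zero
  glob_γ _ a := (singleton_γStar_γStar a).trans (by ext; simp)
  glob_δ _ a := (δStar_γStar a).trans (by ext; simp)
  strict _ a h := lt_irrefl a (toPreOpetope_ltp_iff.1 h)
  strict0 a b := eq_or_ltp_or_ltp_of_le_or_ge (le_total_zero a b)
  disj _ a b := by
    rintro ⟨hm, hp⟩
    have hab : a ≤ b ∨ b ≤ a :=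
      hp.imp (toPreOpetope_ltp_iff.1 · |>.le) (toPreOpetope_ltp_iff.1 · |>.le)
    exact hm.elim (not_ltm_of_le_or_ge hab) (not_ltm_of_le_or_ge hab.symm)
  pencil_γ _ _ _ h := eq_or_ltp_or_ltp_of_le_or_ge (le_or_ge_of_γStar_eq h)
  pencil_δ _ _ _ _ ha hb := eq_or_ltp_or_ltp_of_le_or_ge (le_or_ge_of_mem_δStar ha hb)
  size _ _ _ ha hb := eq_of_isMax (not_exists_mem_δStar_iff_isMax.1 ha)
    (not_exists_mem_δStar_iff_isMax.1 hb)

end TreeComplex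

/-- Let `(S, σ)` be a tree complex.  The face structure `S*` with
`S*_i = S_{i+1} ◁ S_i`, codomain `γ(p) = sup(lvs(p)°)` (characterized as the least upper
bound of `lvs(p)°` in the constellation order) and domain `δ(p) = cvr(lvs(p)°)`, is a
positive opetope (it satisfies globularity, strictness, disjointness and pencil
linearity, with at most one maximal face in each dimension), and it has exactly one
maximal face in each dimension up to `dim(S)`. -/
theorem stmt_19 (T : TreeComplex)
    (γf : ∀ i, T.S (i+2) ⊕ T.S (i+1) → T.S (i+1) ⊕ T.S i)
    (hγ : ∀ i p, T.IsGammaOf i p (γf i p)) :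
    PreOpetope.IsOpetope ⟨fun k => T.S (k+1) ⊕ T.S k, γf, fun k => T.δStar k⟩ ∧
    ∀ l, l ≤ T.n → ∃ a : T.S (l+1) ⊕ T.S l, ¬ ∃ c, a ∈ T.δStar l c := by
  obtain rfl : γf = T.γStar := funext₂ fun i p => (hγ i p).eq_γStar
  refine ⟨T.isOpetope, fun l hl => ?_⟩
  obtain ⟨a, ha⟩ := TreeComplex.exists_isMax hl
  exact ⟨a, TreeComplex.not_exists_mem_δStar_iff_isMax.2 ha⟩
end
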